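/- arXiv:1709.03633 — 4 statements merged into one kernel-verified Lean document; each statement's English description precedes it below -/
import Mathlib

section
/- For all real t with 0 < t ≤ 1/2, M(t) < R(t), where M(t) = log t - log(|log(1-t)|) - (log(1-t)+t)/t and R(t) = t - log(1+t). -/
/-!
With `u = -log (1 - t)`, the left-hand side equals `g (u / t) - 1` and the right-hand side
`g (1 + t) - 1`, where `g x = x - log x` is strictly increasing on `[1, ∞)`. So it suffices that
`t < u < t + t ^ 2`; the upper bound follows from `exp s ≥ 1 + s + s ^ 2 / 2` at `s = t + t ^ 2`.
-/

open Real

lemma sub_log_lt_sub_log {a b : ℝ} (ha : 1 ≤ a) (hab : a < b) : a - log a < b - log b := by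
  have ha0 : 0 < a := by linarith
  have hlog : log (b / a) < b / a - 1 :=
    log_lt_sub_one_of_pos (div_pos (ha0.trans hab) ha0) (by rw [Ne, div_eq_one_iff_eq ha0.ne']; exact hab.ne')
  have hdiv : b / a - 1 ≤ b - a := by
    rw [div_sub_one ha0.ne', div_le_iff₀ ha0]
    nlinarith
  rw [log_div (by linarith) ha0.ne'] at hlog
  linarith

lemma lt_neg_log_one_sub {t : ℝ} (ht0 : 0 < t) (ht1 : t < 1) : t < -log (1 - t) := by
  have := log_lt_sub_one_of_pos (x := 1 - t) (by linarith) (by linarith)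
  linarith

lemma neg_log_one_sub_lt {t : ℝ} (ht0 : 0 < t) (ht1 : t ≤ 1 / 2) : -log (1 - t) < t + t ^ 2 := by
  have h1 : 0 < 1 - t := by linarith
  have hexp := quadratic_le_exp_of_nonneg (show 0 ≤ t + t ^ 2 by positivity)
  have hprod : 1 < (1 - t) * exp (t + t ^ 2) := by
    nlinarith [mul_le_mul_of_nonneg_left hexp h1.le, pow_pos ht0 3, pow_pos ht0 4]
  have : 1 / (1 - t) < exp (t + t ^ 2) := by
    rw [div_lt_iff₀ h1]; linarith
  rw [← log_inv, ← one_div, log_lt_iff_lt_exp (by positivity)]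
  exact this

theorem M_lt_R (t : ℝ) (ht0 : 0 < t) (ht1 : t ≤ 1/2) :
    Real.log t - Real.log |Real.log (1 - t)| - (Real.log (1 - t) + t) / t
      < t - Real.log (1 + t) := by
  set u := -log (1 - t) with hu
  have hlower : t < u := lt_neg_log_one_sub ht0 (by linarith)
  have hupper : u < t + t ^ 2 := neg_log_one_sub_lt ht0 ht1
  have hu0 : 0 < u := ht0.trans hlower
  have hlhs : log t - log |log (1 - t)| - (log (1 - t) + t) / t = u / t - log (u / t) - 1 := by
    rw [show log (1 - t) = -u by rw [hu, neg_neg], abs_neg, abs_of_pos hu0,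
      log_div hu0.ne' ht0.ne']
    field_simp
    ring
  have hmono : u / t - log (u / t) < (1 + t) - log (1 + t) := by
    refine sub_log_lt_sub_log ((one_le_div ht0).mpr hlower.le) ?_
    rw [div_lt_iff₀ ht0]
    linarith
  rw [hlhs]
  linarith
end

section
/- Any two distinct points z, z' in the region { x + iy : -1/2 < x ≤ 1/2, y > 1/N } of the upper half-plane are Γ₀(N)-inequivalent: if γ ∈ Γ₀(N) with γ·z = z' and both z, z' are in the region, then z = z'. -/
/-!
If the lower-left entry `c` of `γ` vanishes, `γ` acts as an integer translation, and the strip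
`-1/2 < Re ≤ 1/2` meets each orbit of the translations at most once. Otherwise `N ∣ c` forces
`N ≤ |c|`, while `Im (γ z) = Im z / |c z + d|² ≤ 1 / (c² Im z)`; so `Im z` and `Im (γ z)`
cannot both exceed `1/N`.
-/

open UpperHalfPlane ModularGroup MatrixGroups

theorem eq_zero_of_mem_Ioc_of_add_intCast_mem_Ioc {x : ℝ} {m : ℤ}
    (hx : x ∈ Set.Ioc (-1/2) (1/2)) (hxm : x + m ∈ Set.Ioc (-1/2) (1/2)) : m = 0 := by
  have hlo : (-1 : ℝ) < m := by linarith [hx.2, hxm.1]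
  have hhi : (m : ℝ) < 1 := by linarith [hx.1, hxm.2]
  have : -1 < m ∧ m < 1 := ⟨mod_cast hlo, mod_cast hhi⟩
  omega

theorem ModularGroup.sq_c_mul_im_mul_im_smul_le_one (g : SL(2, ℤ)) (z : ℍ) :
    (g 1 0 : ℝ) ^ 2 * z.im * (g • z).im ≤ 1 := by
  have hpos := normSq_denom_pos g z.im_ne_zero
  rw [im_smul_eq_div_normSq, ← mul_div_assoc, div_le_one hpos, mul_assoc, ← sq, ← mul_pow]
  exact z.c_mul_im_sq_le_normSq_denom g

theorem CongruenceSubgroup.sq_le_sq_c_of_mem_Gamma0 {N : ℕ} {γ : SL(2, ℤ)}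
    (hγ : γ ∈ Gamma0 N) (hc : γ 1 0 ≠ 0) : (N : ℝ) ^ 2 ≤ (γ 1 0 : ℝ) ^ 2 := by
  rw [Gamma0_mem, ZMod.intCast_zmod_eq_zero_iff_dvd] at hγ
  have hle : N ≤ (γ 1 0).natAbs :=
    Nat.le_of_dvd (Int.natAbs_pos.mpr hc) (Int.natCast_dvd.mp hγ)
  calc (N : ℝ) ^ 2 ≤ ((γ 1 0).natAbs : ℝ) ^ 2 := by gcongr
    _ = (γ 1 0 : ℝ) ^ 2 := by rw [Nat.cast_natAbs, Int.cast_abs, sq_abs]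

theorem region_inequivalent_general (N : ℕ)
    (z z' : UpperHalfPlane)
    (hz : -1/2 < z.re ∧ z.re ≤ 1/2 ∧ 1 / (N : ℝ) < z.im)
    (hz' : -1/2 < z'.re ∧ z'.re ≤ 1/2 ∧ 1 / (N : ℝ) < z'.im)
    (γ : Matrix.SpecialLinearGroup (Fin 2) ℤ) (hγ : γ ∈ CongruenceSubgroup.Gamma0 N)
    (h : γ • z = z') : z = z' := by
  subst h
  by_cases hc : γ 1 0 = 0
  · obtain ⟨n, hn⟩ := exists_eq_T_zpow_of_c_eq_zero hc
    rw [hn, re_T_zpow_smul] at hz'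
    have hn0 : n = 0 :=
      eq_zero_of_mem_Ioc_of_add_intCast_mem_Ioc ⟨hz.1, hz.2.1⟩ ⟨hz'.1, hz'.2.1⟩
    simp [hn, hn0]
  · exfalso
    have hNc := CongruenceSubgroup.sq_le_sq_c_of_mem_Gamma0 hγ hc
    have hN : (0 : ℝ) < N := by
      rw [Nat.cast_pos, Nat.pos_iff_ne_zero]
      rintro rfl
      simp_all [CongruenceSubgroup.Gamma0_mem]
    have h1 : 1 < N * z.im := (div_lt_iff₀' hN).mp hz.2.2
    have h2 : 1 < N * (γ • z).im := (div_lt_iff₀' hN).mp hz'.2.2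
    refine lt_irrefl (1 : ℝ) ?_
    calc 1 < (N * z.im) * (N * (γ • z).im) := one_lt_mul_of_lt_of_le h1 h2.le
      _ = (N : ℝ) ^ 2 * z.im * (γ • z).im := by ring
      _ ≤ (γ 1 0 : ℝ) ^ 2 * z.im * (γ • z).im := by gcongr
      _ ≤ 1 := sq_c_mul_im_mul_im_smul_le_one γ z

theorem region_inequivalent (N : ℕ) (hN : 0 < N)
    (z z' : UpperHalfPlane)
    (hz : -1/2 < z.re ∧ z.re ≤ 1/2 ∧ 1 / (N : ℝ) < z.im)
    (hz' : -1/2 < z'.re ∧ z'.re ≤ 1/2 ∧ 1 / (N : ℝ) < z'.im)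
    (γ : Matrix.SpecialLinearGroup (Fin 2) ℤ) (hγ : γ ∈ CongruenceSubgroup.Gamma0 N)
    (h : γ • z = z') : z = z' :=
  region_inequivalent_general N z z' hz hz' γ hγ h
end

section
/- Let k, ℓ be positive integers and χ a function ℤ → ℂ with |χ(ℓ)| = |χ(ℓ+1)| = 1. Define f_n(z) = conj(χ(n))·n^{k-1}·exp(2πinz) and h(z) = f_ℓ(z) + f_{ℓ+1}(z). Then h(x + iy) = 0 with x ∈ (-1/2, 1/2] if and only if exp(2πix) = -conj(χ(ℓ))·χ(ℓ+1) and y = -((k-1)/(2π))·log(1 - 1/(ℓ+1)); in particular h has exactly one zero in the strip { x + iy : -1/2 < x ≤ 1/2, y ∈ ℝ }. -/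
/-!
Factoring out `exp (2πiℓz)`, `h z = 0` says `exp (2πiz) = u · r` with the unimodular
`u = -conj (χ ℓ) · χ (ℓ + 1)` (since `(conj c)⁻¹ = c` when `‖c‖ = 1`) and the positive
`r = (ℓ / (ℓ + 1)) ^ (k - 1)`. For `z = x + iy`, `exp (2πiz) = exp (2πix) · exp (-2πy)` is again
a unimodular number times a positive one, so by uniqueness of the polar decomposition
`exp (2πix) = u` and `exp (-2πy) = r`. The first fixes `x = arg u / 2π` in `(-1/2, 1/2]`, the
second fixes `y`.
-/

open Complex

open scoped Real ComplexConjugate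

namespace Complex

lemma exp_two_pi_I_mul_ofReal_add_I_mul (x y : ℝ) :
    exp (2 * π * I * (x + I * y)) = exp (2 * π * I * x) * (Real.exp (-(2 * π * y)) : ℂ) := by
  rw [ofReal_exp, ← exp_add]
  congr 1
  push_cast
  linear_combination (2 * π * (y : ℂ)) * I_sq

lemma norm_exp_two_pi_I_mul_ofReal (x : ℝ) : ‖exp (2 * π * I * x)‖ = 1 := by
  rw [show 2 * π * I * x = ((2 * π * x : ℝ) : ℂ) * I by push_cast; ring]
  exact norm_exp_ofReal_mul_I _

lemma mul_ofReal_eq_mul_ofReal_iff {u v : ℂ} {r s : ℝ} (hv : ‖v‖ = 1) (hu : ‖u‖ = 1)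
    (hs : 0 ≤ s) (hr : 0 < r) : v * s = u * r ↔ v = u ∧ s = r := by
  refine ⟨fun h => ?_, fun ⟨hvu, hsr⟩ => by rw [hvu, hsr]⟩
  have hsr : s = r := by
    simpa [hv, hu, abs_of_nonneg hs, abs_of_pos hr] using congrArg (‖·‖) h
  subst hsr
  exact ⟨mul_right_cancel₀ (ofReal_ne_zero.2 hr.ne') h, rfl⟩

lemma exp_two_pi_I_mul_ofReal_eq_iff {u : ℂ} (hu : ‖u‖ = 1) {x : ℝ}
    (hx : x ∈ Set.Ioc (-1 / 2) (1 / 2)) : exp (2 * π * I * x) = u ↔ x = arg u / (2 * π) := by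
  have hθ : 2 * π * x ∈ Set.Ioc (-π) (-π + 2 * π) := by
    constructor <;> nlinarith [hx.1, hx.2, Real.pi_pos]
  rw [show 2 * π * I * x = ((2 * π * x : ℝ) : ℂ) * I by push_cast; ring,
    eq_div_iff Real.two_pi_pos.ne', mul_comm x]
  constructor
  · rintro rfl
    rw [arg_exp_mul_I, (toIocMod_eq_self _).2 hθ]
  · intro h
    simpa [h, hu] using norm_mul_exp_arg_mul_I u

lemma mul_exp_add_mul_exp_succ_eq_zero_iff {a b t n z : ℂ} (hb : b ≠ 0) :
    a * exp (t * n * z) + b * exp (t * (n + 1) * z) = 0 ↔ exp (t * z) = -a / b := by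
  rw [show t * (n + 1) * z = t * n * z + t * z by ring, exp_add,
    show ∀ E W : ℂ, a * E + b * (E * W) = E * (a + b * W) by intros; ring, mul_eq_zero,
    or_iff_right (exp_ne_zero _), eq_div_iff hb, add_eq_zero_iff_eq_neg', mul_comm]

lemma neg_conj_mul_div_conj_mul {a b p q : ℂ} (hb : ‖b‖ = 1) :
    -(conj a * p) / (conj b * q) = -conj a * b * (p / q) := by
  rw [div_eq_mul_inv, mul_inv, inv_eq_conj (by rwa [norm_conj]), conj_conj]
  ring

lemma arg_div_two_pi_mem_Ioc (u : ℂ) : arg u / (2 * π) ∈ Set.Ioc (-1 / 2) (1 / 2) := by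
  constructor
  · rw [lt_div_iff₀ Real.two_pi_pos]; linarith [neg_pi_lt_arg u]
  · rw [div_le_iff₀ Real.two_pi_pos]; linarith [arg_le_pi u]

lemma conj_mul_pow_mul_exp_add_succ_eq_zero_iff (χ : ℤ → ℂ) (K ℓ : ℕ) (hχ : ‖χ (ℓ + 1)‖ = 1)
    (z : ℂ) :
    conj (χ ℓ) * (ℓ : ℂ) ^ K * exp (2 * π * I * ℓ * z) +
        conj (χ (ℓ + 1 : ℕ)) * ((ℓ + 1 : ℕ) : ℂ) ^ K * exp (2 * π * I * (ℓ + 1 : ℕ) * z) = 0 ↔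
      exp (2 * π * I * z) = -conj (χ ℓ) * χ (ℓ + 1) * ((1 - 1 / ((ℓ : ℝ) + 1)) ^ K : ℝ) := by
  have hχ0 : χ (ℓ + 1) ≠ 0 := norm_ne_zero_iff.1 (by rw [hχ]; exact one_ne_zero)
  rw [Nat.cast_succ, Nat.cast_succ, mul_exp_add_mul_exp_succ_eq_zero_iff
    (mul_ne_zero ((map_ne_zero _).2 hχ0) (pow_ne_zero _ (Nat.cast_add_one_ne_zero ℓ))),
    neg_conj_mul_div_conj_mul hχ, ← div_pow]
  push_cast
  rw [one_sub_div (Nat.cast_add_one_ne_zero (R := ℂ) ℓ), add_sub_cancel_right]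

end Complex

lemma Real.exp_neg_two_pi_mul_eq_iff {r : ℝ} (hr : 0 < r) (y : ℝ) :
    Real.exp (-(2 * π * y)) = r ↔ y = -Real.log r / (2 * π) := by
  rw [← Real.exp_log hr, Real.exp_eq_exp, Real.log_exp, eq_div_iff Real.two_pi_pos.ne']
  constructor <;> intro h <;> linarith

theorem h_unique_zero (k ℓ : ℕ) (hk : 1 ≤ k) (hℓ : 1 ≤ ℓ)
    (χ : ℤ → ℂ) (hχℓ : ‖χ ℓ‖ = 1) (hχℓ1 : ‖χ (ℓ + 1)‖ = 1)
    (f : ℕ → ℂ → ℂ)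
    (hf : ∀ (n : ℕ) (z : ℂ), f n z =
      (starRingEnd ℂ) (χ n) * (n : ℂ) ^ (k - 1) * Complex.exp (2 * Real.pi * Complex.I * n * z))
    (h : ℂ → ℂ) (hh : ∀ z : ℂ, h z = f ℓ z + f (ℓ + 1) z) :
    (∀ x y : ℝ, -1/2 < x → x ≤ 1/2 →
      (h (x + Complex.I * y) = 0 ↔
        (Complex.exp (2 * Real.pi * Complex.I * x) = -(starRingEnd ℂ) (χ ℓ) * χ (ℓ + 1) ∧
         y = -(((k : ℝ) - 1) / (2 * Real.pi)) * Real.log (1 - 1 / ((ℓ : ℝ) + 1))))) ∧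
    (∃! z : ℂ, (-1/2 < z.re ∧ z.re ≤ 1/2) ∧ h z = 0) := by
  set u : ℂ := -conj (χ ℓ) * χ (ℓ + 1)
  set r : ℝ := (1 - 1 / ((ℓ : ℝ) + 1)) ^ (k - 1)
  set y₀ : ℝ := -(((k : ℝ) - 1) / (2 * π)) * Real.log (1 - 1 / ((ℓ : ℝ) + 1))
  have hu : ‖u‖ = 1 := by simp [u, hχℓ, hχℓ1]
  have hr : 0 < r := by
    have : (1 : ℝ) / (ℓ + 1) < 1 := by
      rw [div_lt_one (by positivity)]; exact_mod_cast Nat.lt_succ_of_le hℓ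
    exact pow_pos (by linarith) _
  have hy₀ : -Real.log r / (2 * π) = y₀ := by
    rw [Real.log_pow, Nat.cast_sub hk]; push_cast; ring
  have h_eq_zero_iff : ∀ x y : ℝ, h (x + I * y) = 0 ↔ exp (2 * π * I * x) = u ∧ y = y₀ := by
    intro x y
    rw [hh, hf, hf, conj_mul_pow_mul_exp_add_succ_eq_zero_iff χ _ ℓ hχℓ1,
      exp_two_pi_I_mul_ofReal_add_I_mul, mul_ofReal_eq_mul_ofReal_iff
      (norm_exp_two_pi_I_mul_ofReal x) hu (Real.exp_pos _).le hr,
      Real.exp_neg_two_pi_mul_eq_iff hr, hy₀]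
  refine ⟨fun x y _ _ => h_eq_zero_iff x y, ?_⟩
  set x₀ : ℝ := arg u / (2 * π)
  have hx₀ : x₀ ∈ Set.Ioc (-1 / 2) (1 / 2) := arg_div_two_pi_mem_Ioc u
  refine ⟨x₀ + I * y₀, ?_, ?_⟩
  · exact ⟨by simpa using hx₀,
      (h_eq_zero_iff _ _).2 ⟨(exp_two_pi_I_mul_ofReal_eq_iff hu hx₀).2 rfl, rfl⟩⟩
  · rintro z ⟨hz, hz0⟩
    rw [← re_add_im z, mul_comm, h_eq_zero_iff] at hz0
    rw [← re_add_im z, (exp_two_pi_I_mul_ofReal_eq_iff hu hz).1 hz0.1, hz0.2, mul_comm I]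
end

section
/- Let s > 0 and x > 0 with x ≥ s + 2, and let Q(s,x) = (1/Γ(s))·∫_x^∞ t^{s-1} e^{-t} dt be the normalized upper incomplete gamma function. Then Q(s,x) ≤ C·( exp(-(x-s)²/(4s)) + exp(-|x-s|/4) ) for some absolute constant C. -/
/-!
Chernoff's method: for `0 ≤ λ < 1` the weight `exp (λ (t - x)) ≥ 1` on `t > x` bounds the tail
integral by `exp (-λ x)` times the full integral of `t ^ (s - 1) * exp (-(1 - λ) t)`, which is
`(1 - λ) ^ (-s) Γ(s)`. Since `(1 - λ)⁻¹ ≤ exp (λ + λ²)` for `λ ≤ 1/2`, the normalized tail is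
at most `exp (-λ (x - s) + s λ²)`. Taking `λ = (x - s) / (2 s)` when `x ≤ 2 s` gives the
Gaussian term, and `λ = 1/2` when `x ≥ 2 s` gives the exponential one.
-/

open Set Real MeasureTheory

namespace Real

lemma one_div_one_sub_le_exp_add_sq {l : ℝ} (h0 : 0 ≤ l) (h1 : l ≤ 1 / 2) :
    1 / (1 - l) ≤ exp (l + l ^ 2) := by
  have hquad := quadratic_le_exp_of_nonneg (by positivity : 0 ≤ l + l ^ 2)
  rw [div_le_iff₀ (by linarith)]
  nlinarith [mul_nonneg (mul_nonneg h0 h0) (by linarith : 0 ≤ 1 / 2 - l)]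

/-- The regularized upper incomplete gamma function `Q(s, x)`. -/
noncomputable def upperIncGammaReg (s x : ℝ) : ℝ :=
  (1 / Gamma s) * ∫ t in Ioi x, t ^ (s - 1) * exp (-t)

lemma setIntegral_Ioi_rpow_mul_exp_neg_le {s x l : ℝ} (hs : 0 < s) (hx : 0 ≤ x) (hl0 : 0 ≤ l)
    (hl1 : l < 1) :
    ∫ t in Ioi x, t ^ (s - 1) * exp (-t) ≤ exp (-(l * x)) * ((1 / (1 - l)) ^ s * Gamma s) := by
  set g : ℝ → ℝ := fun t ↦ t ^ (s - 1) * exp (-((1 - l) * t))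
  have hg_integral : ∫ t in Ioi 0, g t = (1 / (1 - l)) ^ s * Gamma s :=
    integral_rpow_mul_exp_neg_mul_Ioi hs (by linarith)
  have hg : IntegrableOn g (Ioi 0) := .of_integral_ne_zero (by rw [hg_integral]; positivity)
  calc ∫ t in Ioi x, t ^ (s - 1) * exp (-t)
      ≤ ∫ t in Ioi x, exp (-(l * x)) * g t := by
        have hpos : ∀ t ∈ Ioi x, 0 < t := fun t (ht : x < t) ↦ hx.trans_lt ht
        refine setIntegral_mono_of_nonneg (fun t ht ↦ by have := hpos t ht; positivity)
          (fun t ht ↦ ?_) ((hg.mono_set (Ioi_subset_Ioi hx)).const_mul _)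
        have ht0 := hpos t ht
        have hweight : -t ≤ -(l * x) + -((1 - l) * t) := by nlinarith [mem_Ioi.mp ht]
        calc t ^ (s - 1) * exp (-t) ≤ t ^ (s - 1) * exp (-(l * x) + -((1 - l) * t)) := by
              gcongr
          _ = exp (-(l * x)) * g t := by rw [exp_add]; ring
    _ = exp (-(l * x)) * ∫ t in Ioi x, g t := integral_const_mul _ _
    _ ≤ exp (-(l * x)) * ∫ t in Ioi 0, g t := by
        refine mul_le_mul_of_nonneg_left
          (setIntegral_mono_set hg ?_ (Ioi_subset_Ioi hx).eventuallyLE) (exp_pos _).le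
        filter_upwards [self_mem_ae_restrict measurableSet_Ioi] with t (ht : 0 < t)
        positivity
    _ = exp (-(l * x)) * ((1 / (1 - l)) ^ s * Gamma s) := by rw [hg_integral]

lemma upperIncGammaReg_le_exp {s x l : ℝ} (hs : 0 < s) (hx : 0 ≤ x) (hl0 : 0 ≤ l)
    (hl1 : l ≤ 1 / 2) : upperIncGammaReg s x ≤ exp (-(l * (x - s)) + s * l ^ 2) := by
  calc upperIncGammaReg s x
      ≤ 1 / Gamma s * (exp (-(l * x)) * ((1 / (1 - l)) ^ s * Gamma s)) :=
        mul_le_mul_of_nonneg_left (setIntegral_Ioi_rpow_mul_exp_neg_le hs hx hl0 (by linarith))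
          (by positivity)
    _ = exp (-(l * x)) * (1 / (1 - l)) ^ s := by field_simp [(Gamma_pos_of_pos hs).ne']
    _ ≤ exp (-(l * x)) * exp (l + l ^ 2) ^ s := by
        gcongr
        · exact one_div_nonneg.mpr (by linarith)
        · exact one_div_one_sub_le_exp_add_sq hl0 hl1
    _ = exp (-(l * (x - s)) + s * l ^ 2) := by rw [← exp_mul, ← exp_add]; ring_nf

lemma upperIncGammaReg_le_exp_neg_sq {s x : ℝ} (hs : 0 < s) (hsx : s ≤ x) (hx : x ≤ 2 * s) :
    upperIncGammaReg s x ≤ exp (-(x - s) ^ 2 / (4 * s)) := by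
  have hl0 : 0 ≤ (x - s) / (2 * s) := div_nonneg (by linarith) (by linarith)
  have hl1 : (x - s) / (2 * s) ≤ 1 / 2 := by rw [div_le_iff₀ (by linarith)]; linarith
  convert upperIncGammaReg_le_exp (x := x) hs (by linarith) hl0 hl1 using 2
  field_simp
  ring

lemma upperIncGammaReg_le_exp_neg_div_four {s x : ℝ} (hs : 0 < s) (hx : 2 * s ≤ x) :
    upperIncGammaReg s x ≤ exp (-(x - s) / 4) :=
  (upperIncGammaReg_le_exp hs (by linarith) (by norm_num) le_rfl).trans
    (exp_le_exp.mpr (by linarith))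

end Real

theorem incomplete_gamma_tail_bound :
    ∃ C > (0 : ℝ), ∀ s x : ℝ, 0 < s → 0 < x → s + 2 ≤ x →
      (1 / Real.Gamma s) * ∫ t in Set.Ioi x, t ^ (s - 1) * Real.exp (-t)
        ≤ C * (Real.exp (-(x - s) ^ 2 / (4 * s)) + Real.exp (-|x - s| / 4)) := by
  refine ⟨1, one_pos, fun s x hs _ hsx ↦ ?_⟩
  change upperIncGammaReg s x ≤ _
  rw [one_mul, abs_of_nonneg (by linarith : 0 ≤ x - s)]
  rcases le_total x (2 * s) with hx | hx
  · linarith [upperIncGammaReg_le_exp_neg_sq hs (by linarith) hx, exp_pos (-(x - s) / 4)]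
  · linarith [upperIncGammaReg_le_exp_neg_div_four hs hx, exp_pos (-(x - s) ^ 2 / (4 * s))]
end
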